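/- arXiv:2407.06120 — 2 statements merged into one kernel-verified Lean document; each statement's English description precedes it below -/
import Mathlib

section
/- Let G ∈ R^{N×r} and G_S ∈ R^{n×r} consist of n rows of G, with G_S of full column rank r. Define Σ = (1/N)GᵀG and Σ_S = (1/n)G_SᵀG_S. Suppose Σ ≼ c_S Σ_S in the Loewner order for some c_S > 0. Then tr(Σ Σ_S^{-1}) ≤ c_S r. Consequently, under the noisy linear model y_S = G_Sθ* + z_S with E[z_S] = 0, E[z_S z_Sᵀ] = σ² I_n, and θ_S = G_S^† y_S, the expected excess risk satisfies E[(1/N)‖G(θ_S − θ*)‖₂²] ≤ c_S σ² r / n. -/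
open Matrix MeasureTheory

/-- The Moore–Penrose pseudoinverse characterization: `B` is the pseudoinverse of `A`. -/
def IsMoorePenrose {n m : ℕ} (A : Matrix (Fin n) (Fin m) ℝ) (B : Matrix (Fin m) (Fin n) ℝ) :
    Prop :=
  A * B * A = A ∧ B * A * B = B ∧ (A * B)ᵀ = A * B ∧ (B * A)ᵀ = B * A

/-!
Since `Σ_S⁻¹` is positive semidefinite, `0 ≤ tr((c_S Σ_S - Σ) Σ_S⁻¹) = c_S r - tr(Σ Σ_S⁻¹)`.
For the risk, full column rank makes `G_S^†` a left inverse of `G_S` with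
`G_S^† G_S^†ᵀ = (G_SᵀG_S)⁻¹`, so `θ_S - θ* = G_S^† z_S`. White noise turns the expected value of
`‖G G_S^† z_S‖²` into `σ² tr(G G_S^† G_S^†ᵀ Gᵀ) = σ² tr(GᵀG (G_SᵀG_S)⁻¹) = σ² (N / n) tr(Σ Σ_S⁻¹)`.
-/

namespace Matrix

variable {m n : Type*} [Fintype n]

theorem mulVec_injective_of_rank_eq_card {K : Type*} [Field K] {A : Matrix m n K}
    (hA : A.rank = Fintype.card n) : Function.Injective A.mulVec := by
  have h := A.mulVecLin.finrank_range_add_finrank_ker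
  rwa [← rank, hA, Module.finrank_fintype_fun_eq_card, add_eq_left,
    Submodule.finrank_eq_zero, LinearMap.ker_eq_bot] at h

open scoped MatrixOrder ComplexOrder in
theorem PosSemidef.trace_mul_nonneg {𝕜 : Type*} [RCLike 𝕜] {A B : Matrix n n 𝕜}
    (hA : A.PosSemidef) (hB : B.PosSemidef) : 0 ≤ (A * B).trace := by
  classical
  set R := CFC.sqrt B
  have hR : Rᴴ = R := (CFC.sqrt_nonneg B).posSemidef.isHermitian.eq
  have hRR : R * R = B := CFC.sqrt_mul_sqrt_self B hB.nonneg
  calc 0 ≤ (Rᴴ * A * R).trace := (hA.conjTranspose_mul_mul_same R).trace_nonneg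
    _ = (A * B).trace := by rw [hR, ← hRR, Matrix.mul_assoc, trace_mul_comm, Matrix.mul_assoc]

theorem trace_mul_inv_le_of_posSemidef_sub [DecidableEq n] {A B : Matrix n n ℝ} {c : ℝ}
    (hB : B.PosDef) (hAB : (c • B - A).PosSemidef) :
    (A * B⁻¹).trace ≤ c * Fintype.card n := by
  have h := hAB.trace_mul_nonneg hB.inv.posSemidef
  rwa [Matrix.sub_mul, Matrix.smul_mul, mul_nonsing_inv B hB.det_pos.ne'.isUnit, trace_sub,
    trace_smul, trace_one, smul_eq_mul, sub_nonneg] at h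

end Matrix

namespace IsMoorePenrose

variable {n m : ℕ} {A : Matrix (Fin n) (Fin m) ℝ} {B : Matrix (Fin m) (Fin n) ℝ}

theorem mul_eq_one (hAB : IsMoorePenrose A B) (hA : Function.Injective A.mulVec) : B * A = 1 := by
  cases isEmpty_or_nonempty (Fin m)
  · exact Subsingleton.elim _ _
  · refine mul_right_injective_iff_mulVec_injective.mpr hA ?_
    simpa only [← Matrix.mul_assoc, Matrix.mul_one] using hAB.1

theorem mul_transpose_eq_inv (hAB : IsMoorePenrose A B) (hA : Function.Injective A.mulVec) :
    B * Bᵀ = (Aᵀ * A)⁻¹ := by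
  refine (inv_eq_right_inv ?_).symm
  calc Aᵀ * A * (B * Bᵀ) = Aᵀ * ((A * B)ᵀ * Bᵀ) := by
        rw [hAB.2.2.1]; simp only [Matrix.mul_assoc]
    _ = Aᵀ * Bᵀ := by rw [← transpose_mul, ← Matrix.mul_assoc, hAB.2.1]
    _ = (B * A)ᵀ := (transpose_mul B A).symm
    _ = 1 := by rw [hAB.mul_eq_one hA, transpose_one]

end IsMoorePenrose

theorem integral_sum_sq_mulVec_eq_trace {Ω : Type*} [MeasurableSpace Ω] {μ : Measure Ω}
    {ι κ : Type*} [Fintype ι] [Fintype κ] [DecidableEq κ] (M : Matrix ι κ ℝ)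
    {z : Ω → κ → ℝ} {σ : ℝ} (hint : ∀ j k, Integrable (fun ω => z ω j * z ω k) μ)
    (hcov : ∀ j k, ∫ ω, z ω j * z ω k ∂μ = if j = k then σ ^ 2 else 0) :
    ∫ ω, ∑ i, (M *ᵥ z ω) i ^ 2 ∂μ = σ ^ 2 * (M * Mᵀ).trace := by
  have hexpand : ∀ ω, ∑ i, (M *ᵥ z ω) i ^ 2
      = ∑ i, ∑ j, ∑ k, M i j * M i k * (z ω j * z ω k) := fun ω => by
    simp only [mulVec, dotProduct, sq, Finset.sum_mul_sum]
    refine Finset.sum_congr rfl fun i _ => Finset.sum_congr rfl fun j _ => ?_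
    refine Finset.sum_congr rfl fun k _ => by ring
  have hint' : ∀ i j k, Integrable (fun ω => M i j * M i k * (z ω j * z ω k)) μ :=
    fun i j k => (hint j k).const_mul _
  simp_rw [hexpand]
  rw [integral_finsetSum _ fun i _ => integrable_finsetSum _ fun j _ =>
    integrable_finsetSum _ fun k _ => hint' i j k, trace, Finset.mul_sum]
  refine Finset.sum_congr rfl fun i _ => ?_
  rw [integral_finsetSum _ fun j _ => integrable_finsetSum _ fun k _ => hint' i j k]
  simp_rw [integral_finsetSum _ fun k _ => hint' i _ k]
  simp only [integral_const_mul, hcov, mul_ite, mul_zero, Finset.sum_ite_eq, Finset.mem_univ,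
    if_true, diag, mul_apply, transpose_apply, Finset.mul_sum]
  exact Finset.sum_congr rfl fun j _ => by ring

theorem stmt2_general
    {N n r : ℕ} (hn : 0 < n)
    (G : Matrix (Fin N) (Fin r) ℝ)
    (GS : Matrix (Fin n) (Fin r) ℝ)
    (hrankGS : GS.rank = r)
    (Sg SgS : Matrix (Fin r) (Fin r) ℝ)
    (hSg : Sg = (N : ℝ)⁻¹ • (Gᵀ * G)) (hSgS : SgS = (n : ℝ)⁻¹ • (GSᵀ * GS))
    (cS : ℝ) (hmm : (cS • SgS - Sg).PosSemidef)
    {Ω : Type} [MeasurableSpace Ω] (μ : Measure Ω)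
    (σ : ℝ) (zS : Ω → Fin n → ℝ)
    (hint : ∀ i j, Integrable (fun ω => zS ω i * zS ω j) μ)
    (hcov : ∀ i j, ∫ ω, zS ω i * zS ω j ∂μ = if i = j then σ ^ 2 else 0)
    (θstar : Fin r → ℝ)
    (yS : Ω → Fin n → ℝ) (hy : ∀ ω, yS ω = GS.mulVec θstar + zS ω)
    (GSdag : Matrix (Fin r) (Fin n) ℝ) (hdag : IsMoorePenrose GS GSdag)
    (θS : Ω → Fin r → ℝ) (hθS : ∀ ω, θS ω = GSdag.mulVec (yS ω)) :
    (Sg * SgS⁻¹).trace ≤ cS * r ∧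
    ∫ ω, (N : ℝ)⁻¹ * ∑ i, (G.mulVec (θS ω - θstar) i) ^ 2 ∂μ ≤ cS * σ ^ 2 * r / n := by
  have hinj : Function.Injective GS.mulVec :=
    mulVec_injective_of_rank_eq_card (by rw [hrankGS, Fintype.card_fin])
  have hGram : (GSᵀ * GS).PosDef := by
    simpa only [conjTranspose_eq_transpose_of_trivial] using PosDef.conjTranspose_mul_self GS hinj
  have hSgS_inv : SgS⁻¹ = (n : ℝ) • (GSᵀ * GS)⁻¹ := by
    refine inv_eq_right_inv ?_
    rw [hSgS, smul_mul_smul_comm, inv_mul_cancel₀ (by positivity), one_smul,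
      mul_nonsing_inv _ hGram.det_pos.ne'.isUnit]
  have htrace : (Sg * SgS⁻¹).trace ≤ cS * r := by
    simpa only [Fintype.card_fin] using
      trace_mul_inv_le_of_posSemidef_sub (hSgS ▸ hGram.smul (by positivity)) hmm
  refine ⟨htrace, ?_⟩
  have herr : ∀ ω, G *ᵥ (θS ω - θstar) = (G * GSdag) *ᵥ zS ω := fun ω => by
    rw [hθS, hy, mulVec_add, mulVec_mulVec, hdag.mul_eq_one hinj, one_mulVec, add_sub_cancel_left,
      mulVec_mulVec]
  have hGB : ((G * GSdag) * (G * GSdag)ᵀ).trace = (Gᵀ * G * (GSᵀ * GS)⁻¹).trace := by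
    rw [transpose_mul, ← Matrix.mul_assoc, Matrix.mul_assoc G, hdag.mul_transpose_eq_inv hinj,
      trace_mul_comm, Matrix.mul_assoc]
  calc ∫ ω, (N : ℝ)⁻¹ * ∑ i, (G.mulVec (θS ω - θstar) i) ^ 2 ∂μ
      = (N : ℝ)⁻¹ * (σ ^ 2 * ((G * GSdag) * (G * GSdag)ᵀ).trace) := by
        simp_rw [herr]
        rw [integral_const_mul, integral_sum_sq_mulVec_eq_trace _ hint hcov]
    _ = σ ^ 2 / n * (Sg * SgS⁻¹).trace := by
        rw [hGB, hSg, hSgS_inv, smul_mul_smul_comm, trace_smul, smul_eq_mul]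
        field_simp
    _ ≤ σ ^ 2 / n * (cS * r) := by gcongr
    _ = cS * σ ^ 2 * r / n := by ring

/-- moment matching `Σ ≼ c_S Σ_S` gives `tr(Σ Σ_S⁻¹) ≤ c_S r` and hence an
expected excess risk bound `c_S σ² r / n` for min-norm least squares on the subsample. -/
theorem stmt2
    {N n r : ℕ} (hN : 0 < N) (hn : 0 < n)
    (G : Matrix (Fin N) (Fin r) ℝ) (S : Fin n → Fin N) (hS : Function.Injective S)
    (GS : Matrix (Fin n) (Fin r) ℝ) (hGSdef : GS = G.submatrix S id)
    (hrankGS : GS.rank = r)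
    (Sg SgS : Matrix (Fin r) (Fin r) ℝ)
    (hSg : Sg = (N : ℝ)⁻¹ • (Gᵀ * G)) (hSgS : SgS = (n : ℝ)⁻¹ • (GSᵀ * GS))
    (cS : ℝ) (hcS : 0 < cS) (hmm : (cS • SgS - Sg).PosSemidef)
    {Ω : Type} [MeasurableSpace Ω] (μ : Measure Ω) [IsProbabilityMeasure μ]
    (σ : ℝ) (zS : Ω → Fin n → ℝ)
    (hmean : ∀ i, ∫ ω, zS ω i ∂μ = 0)
    (hint : ∀ i j, Integrable (fun ω => zS ω i * zS ω j) μ)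
    (hcov : ∀ i j, ∫ ω, zS ω i * zS ω j ∂μ = if i = j then σ ^ 2 else 0)
    (θstar : Fin r → ℝ)
    (yS : Ω → Fin n → ℝ) (hy : ∀ ω, yS ω = GS.mulVec θstar + zS ω)
    (GSdag : Matrix (Fin r) (Fin n) ℝ) (hdag : IsMoorePenrose GS GSdag)
    (θS : Ω → Fin r → ℝ) (hθS : ∀ ω, θS ω = GSdag.mulVec (yS ω)) :
    (Sg * SgS⁻¹).trace ≤ cS * r ∧
    ∫ ω, (N : ℝ)⁻¹ * ∑ i, (G.mulVec (θS ω - θstar) i) ^ 2 ∂μ ≤ cS * σ ^ 2 * r / n :=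
  stmt2_general hn G GS hrankGS Sg SgS hSg hSgS cS hmm μ σ zS hint hcov θstar yS hy GSdag hdag θS
    hθS
end

section
/- Let A, B ∈ R^{r×r} be symmetric positive semidefinite, let P ∈ R^{r×r} be an orthogonal projector, and let c > 0 satisfy P A P ≼ c · P B P in the Loewner order. Then tr( A (P B P)^† ) ≤ c · rank(P B P) ≤ c · rank(P). -/
open Matrix

/-!
Write `M = P B P` and `D = M†`. Since `M` is symmetric, so is `D`, and `D = D M D` is then
positive semidefinite; moreover `D` lives on the range of `P`, i.e. `P D = D P = D`. Hence
`tr(A D) = tr(P A P D)`, and pairing the Loewner inequality `P A P ≼ c M` with `D ≽ 0` gives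
`tr(P A P D) ≤ c tr(M D)`. Finally `M D` is an idempotent with the same range as `M`,
so its trace is `rank M`, and `rank M ≤ rank P`.
-/

namespace Matrix

theorem trace_eq_rank_of_isIdempotentElem {K n : Type*} [Field K] [Fintype n] [DecidableEq n]
    {Q : Matrix n n K} (hQ : IsIdempotentElem Q) : Q.trace = Q.rank := by
  have hQ' : IsIdempotentElem (toLin' Q) := by
    rw [IsIdempotentElem, Module.End.mul_eq_comp, ← toLin'_mul, hQ.eq]
  rw [← trace_toLin'_eq, (LinearMap.IsIdempotentElem.isProj_range _ hQ').trace, rank,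
    toLin'_apply']

open scoped ComplexOrder MatrixOrder in
theorem PosSemidef.trace_mul_nonneg_s11 {𝕜 n : Type*} [RCLike 𝕜] [Fintype n] [DecidableEq n]
    {X Y : Matrix n n 𝕜} (hX : X.PosSemidef) (hY : Y.PosSemidef) : 0 ≤ (X * Y).trace := by
  have hsqrt : (CFC.sqrt X)ᴴ = CFC.sqrt X := (CFC.sqrt_nonneg X).posSemidef.isHermitian.eq
  have htrace : (X * Y).trace = ((CFC.sqrt X)ᴴ * Y * CFC.sqrt X).trace := by
    rw [hsqrt, trace_mul_cycle, CFC.sqrt_mul_sqrt_self X hX.nonneg]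
  exact htrace ▸ (hY.conjTranspose_mul_mul_same _).trace_nonneg

end Matrix

namespace IsMoorePenrose

variable {n m : ℕ} {A : Matrix (Fin n) (Fin m) ℝ} {B : Matrix (Fin m) (Fin n) ℝ}

theorem transpose (h : IsMoorePenrose A B) : IsMoorePenrose Aᵀ Bᵀ := by
  obtain ⟨h₁, h₂, h₃, h₄⟩ := h
  refine ⟨?_, ?_, ?_, ?_⟩
  · rw [← transpose_mul, ← transpose_mul, ← Matrix.mul_assoc, h₁]
  · rw [← transpose_mul, ← transpose_mul, ← Matrix.mul_assoc, h₂]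
  · rw [← transpose_mul, transpose_transpose, h₄]
  · rw [← transpose_mul, transpose_transpose, h₃]

theorem eq_transpose_mul_transpose_mul (h : IsMoorePenrose A B) : B = Aᵀ * Bᵀ * B := by
  obtain ⟨-, h₂, -, h₄⟩ := h
  rw [← transpose_mul, h₄, h₂]

theorem eq_mul_transpose_mul_transpose (h : IsMoorePenrose A B) : B = B * Bᵀ * Aᵀ := by
  obtain ⟨-, h₂, h₃, -⟩ := h
  rw [Matrix.mul_assoc, ← transpose_mul, h₃, ← Matrix.mul_assoc, h₂]

theorem unique {C : Matrix (Fin m) (Fin n) ℝ} (hB : IsMoorePenrose A B)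
    (hC : IsMoorePenrose A C) : B = C := by
  have hAB : A * B = A * C := by
    calc A * B = (A * C * (A * B))ᵀ := by rw [← Matrix.mul_assoc, hC.1, hB.2.2.1]
      _ = A * B * (A * C) := by rw [transpose_mul, hB.2.2.1, hC.2.2.1]
      _ = A * C := by rw [← Matrix.mul_assoc, hB.1]
  have hBA : B * A = C * A := by
    calc B * A = (B * (A * C * A))ᵀ := by rw [hC.1, hB.2.2.2]
      _ = C * A * (B * A) := by
        rw [Matrix.mul_assoc A C A, ← Matrix.mul_assoc, transpose_mul, hC.2.2.2, hB.2.2.2]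
      _ = C * A := by rw [Matrix.mul_assoc, ← Matrix.mul_assoc A, hB.1]
  calc B = B * A * B := hB.2.1.symm
    _ = C * A * C := by rw [Matrix.mul_assoc, hAB, ← Matrix.mul_assoc, hBA]
    _ = C := hC.2.1

theorem isSymm {A B : Matrix (Fin n) (Fin n) ℝ} (h : IsMoorePenrose A B) (hA : A.IsSymm) :
    B.IsSymm :=
  (hA.eq ▸ h.transpose).unique h

theorem posSemidef {A B : Matrix (Fin n) (Fin n) ℝ} (h : IsMoorePenrose A B)
    (hA : A.PosSemidef) : B.PosSemidef := by
  have hB : Bᴴ = B := (h.isSymm hA.isHermitian.eq).eq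
  simpa only [hB, h.2.1] using hA.conjTranspose_mul_mul_same B

theorem mul_eq_of_mul_transpose_eq {Q : Matrix (Fin m) (Fin m) ℝ} (h : IsMoorePenrose A B)
    (hQ : Q * Aᵀ = Aᵀ) : Q * B = B := by
  rw [h.eq_transpose_mul_transpose_mul, ← Matrix.mul_assoc, ← Matrix.mul_assoc, hQ]

theorem mul_eq_of_transpose_mul_eq {Q : Matrix (Fin n) (Fin n) ℝ} (h : IsMoorePenrose A B)
    (hQ : Aᵀ * Q = Aᵀ) : B * Q = B := by
  rw [h.eq_mul_transpose_mul_transpose, Matrix.mul_assoc, hQ]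

theorem trace_mul (h : IsMoorePenrose A B) : (A * B).trace = A.rank := by
  have hidem : IsIdempotentElem (A * B) := by
    rw [IsIdempotentElem, ← Matrix.mul_assoc, h.1]
  have hrank : (A * B).rank = A.rank :=
    le_antisymm (rank_mul_le_left A B) (by simpa only [h.1] using rank_mul_le_left (A * B) A)
  rw [trace_eq_rank_of_isIdempotentElem hidem, hrank]

end IsMoorePenrose

theorem stmt11_general {r : ℕ}
    (A B : Matrix (Fin r) (Fin r) ℝ) (hB : B.PosSemidef)
    (P : Matrix (Fin r) (Fin r) ℝ) (hPproj : P * P = P) (hPsymm : Pᵀ = P)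
    (c : ℝ) (hc : 0 < c)
    (hmm : (c • (P * B * P) - P * A * P).PosSemidef)
    (D : Matrix (Fin r) (Fin r) ℝ) (hD : IsMoorePenrose (P * B * P) D) :
    (A * D).trace ≤ c * ((P * B * P).rank : ℝ) ∧
    c * ((P * B * P).rank : ℝ) ≤ c * (P.rank : ℝ) := by
  have hM : (P * B * P).PosSemidef := by
    simpa only [conjTranspose_eq_transpose_of_trivial, hPsymm]
      using hB.conjTranspose_mul_mul_same P
  have hMt : (P * B * P)ᵀ = P * B * P := hM.isHermitian.eq
  have hPD : P * D = D :=
    hD.mul_eq_of_mul_transpose_eq (by rw [hMt, ← Matrix.mul_assoc, ← Matrix.mul_assoc, hPproj])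
  have hDP : D * P = D := hD.mul_eq_of_transpose_mul_eq (by rw [hMt, Matrix.mul_assoc, hPproj])
  have htrace : (A * D).trace = (P * A * P * D).trace := by
    calc (A * D).trace = (A * (P * D * P)).trace := by rw [hPD, hDP]
      _ = (P * A * P * D).trace := by
        rw [← Matrix.mul_assoc, trace_mul_cycle, ← Matrix.mul_assoc]
  have hpair := hmm.trace_mul_nonneg_s11 (hD.posSemidef hM)
  rw [sub_mul, trace_sub, smul_mul_assoc, trace_smul, hD.trace_mul, smul_eq_mul] at hpair
  refine ⟨by linarith, mul_le_mul_of_nonneg_left ?_ hc.le⟩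
  exact_mod_cast rank_mul_le_right (P * B) P

/-- if `P A P ≼ c P B P` then `tr(A (P B P)†) ≤ c rank(P B P) ≤ c rank(P)`. -/
theorem stmt11 {r : ℕ}
    (A B : Matrix (Fin r) (Fin r) ℝ) (hA : A.PosSemidef) (hB : B.PosSemidef)
    (P : Matrix (Fin r) (Fin r) ℝ) (hPproj : P * P = P) (hPsymm : Pᵀ = P)
    (c : ℝ) (hc : 0 < c)
    (hmm : (c • (P * B * P) - P * A * P).PosSemidef)
    (D : Matrix (Fin r) (Fin r) ℝ) (hD : IsMoorePenrose (P * B * P) D) :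
    (A * D).trace ≤ c * ((P * B * P).rank : ℝ) ∧
    c * ((P * B * P).rank : ℝ) ≤ c * (P.rank : ℝ) :=
  stmt11_general A B hB P hPproj hPsymm c hc hmm D hD
end
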